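/- Let H be a finite set with |H| = N ≥ 1, let (X_t)_{t≥1} be i.i.d. uniform draws from H, and let A₁, …, A_r ⊆ H be pairwise disjoint nonempty subsets with |A_i| = a_i. Let T = min_{1≤i≤r} σ_{A_i}. Then E[T] = N · Σ_{∅ ≠ U ⊆ {1,…,r}} (−1)^{1−|U|} · H_{Σ_{i∈U} a_i}, where H_n = Σ_{j=1}^{n} 1/j is the n-th harmonic number. -/

import Mathlib

open MeasureTheory ProbabilityTheory

/-- The collection time `σ_A`: the smallest time `t ≥ 1` such that every element of `A`
has appeared among `X_1, …, X_t` (with the convention `sInf ∅ = 0`). -/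
noncomputable def collectTime {Ω H : Type*} (X : ℕ → Ω → H) (A : Set H) (ω : Ω) : ℕ :=
  sInf {t : ℕ | ∀ a ∈ A, ∃ s, 1 ≤ s ∧ s ≤ t ∧ X s ω = a}

/-- The `n`-th harmonic number `H_n = ∑_{j=1}^n 1/j`, as a real number. -/
noncomputable def harm (n : ℕ) : ℝ := ∑ j ∈ Finset.range n, (1 : ℝ) / (j + 1)

/-!
`T > t` means that no `A i` is complete by time `t`, and the sets `A i` with `i ∈ U` are all
complete exactly when their union `A_U` is. Inclusion–exclusion over the indices therefore
writes `P(T > t)` as `∑_{∅ ≠ U} (-1)^(|U|+1) P(σ_{A_U} > t)`. For a single set `B`,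
inclusion–exclusion over its elements and independence give
`P(σ_B > t) = ∑_{∅ ≠ S ⊆ B} (-1)^(|S|+1) (1 - |S|/N)^t`; summing these geometric series
over `t` yields `E[σ_B] = N ∑_{∅ ≠ S ⊆ B} (-1)^(|S|+1) / |S| = N H_{|B|}`, the last step
being the classical binomial identity for harmonic numbers. Summing `E[T] = ∑_t P(T > t)`
and using `|A_U| = ∑_{i ∈ U} a_i` for disjoint sets gives the formula.
-/

open Finset
open scoped ENNReal

theorem Finset.sum_powerset_eq_add_sum_filter_nonempty {α M : Type*} [AddCommMonoid M]
    (s : Finset α) (f : Finset α → M) :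
    ∑ U ∈ s.powerset, f U = f ∅ + ∑ U ∈ s.powerset with U.Nonempty, f U := by
  rw [← sum_filter_not_add_sum_filter s.powerset Finset.Nonempty, ← sum_singleton f ∅]
  congr 1
  refine sum_congr (ext fun U => ?_) fun _ _ => rfl
  simp only [mem_filter, mem_powerset, not_nonempty_iff_eq_empty, mem_singleton]
  exact ⟨And.right, fun h => ⟨h ▸ empty_subset s, h⟩⟩

theorem sum_range_choose_mul_neg_one_pow_div_succ (n : ℕ) :
    ∑ k ∈ range (n + 1), (n.choose k : ℝ) * ((-1) ^ k / (k + 1)) = 1 / (n + 1) := by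
  have hpascal : ∑ k ∈ range (n + 1), (-1 : ℝ) ^ k * (n + 1).choose (k + 1) = 1 := by
    have h := Int.alternating_sum_range_choose_of_ne (n := n + 1) n.succ_ne_zero
    rw [sum_range_succ'] at h
    simp only [pow_succ, mul_neg_one, neg_mul, sum_neg_distrib, pow_zero, Nat.choose_zero_right,
      Nat.cast_one, mul_one] at h
    exact_mod_cast neg_add_eq_zero.1 h
  have hterm (k : ℕ) : (n.choose k : ℝ) * ((-1) ^ k / (k + 1))
      = (-1 : ℝ) ^ k * (n + 1).choose (k + 1) / (n + 1) := by
    have h : ((n + 1 : ℕ) : ℝ) * n.choose k = (n + 1).choose (k + 1) * (k + 1 : ℕ) := by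
      exact_mod_cast Nat.add_one_mul_choose_eq n k
    push_cast at h
    rw [mul_div_assoc', div_eq_div_iff (by positivity) (by positivity)]
    linear_combination (-1 : ℝ) ^ k * h
  rw [sum_congr rfl fun k _ => hterm k, ← sum_div, hpascal]

theorem harm_eq_sum_range_choose (n : ℕ) :
    harm n = ∑ k ∈ range n, (n.choose (k + 1) : ℝ) * ((-1) ^ k / (k + 1)) := by
  induction n with
  | zero => simp [harm]
  | succ n ih =>
    simp_rw [Nat.choose_succ_succ, Nat.cast_add, add_mul, sum_add_distrib,
      sum_range_choose_mul_neg_one_pow_div_succ, sum_range_succ _ n, Nat.choose_succ_self,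
      Nat.cast_zero, zero_mul, add_zero, ← ih, harm, sum_range_succ]
    ring

theorem sum_powerset_filter_nonempty_neg_one_pow_div_card {α : Type*} (B : Finset α) :
    ∑ S ∈ B.powerset with S.Nonempty, (-1 : ℝ) ^ (#S + 1) / #S = harm #B := by
  have h := sum_powerset_eq_add_sum_filter_nonempty B fun S => (-1 : ℝ) ^ (#S + 1) / #S
  rw [card_empty, Nat.cast_zero, div_zero, zero_add] at h
  rw [← h, sum_powerset_apply_card (fun k => (-1 : ℝ) ^ (k + 1) / k), sum_range_succ',
    harm_eq_sum_range_choose]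
  simp only [Nat.cast_zero, div_zero, smul_zero, add_zero, nsmul_eq_mul]
  refine sum_congr rfl fun k _ => ?_
  push_cast
  ring

section InclusionExclusion

variable {Ω ι : Type*} [MeasurableSpace Ω] {μ : Measure Ω} [IsFiniteMeasure μ]
  {E : ι → Set Ω}

theorem inclusion_exclusion_measureReal_biInter_compl (hE : ∀ i, MeasurableSet (E i))
    (s : Finset ι) :
    μ.real (⋂ i ∈ s, (E i)ᶜ)
      = ∑ U ∈ s.powerset, (-1 : ℝ) ^ #U * μ.real (⋂ i ∈ U, E i) := by
  have hind (ω : Ω) : (⋂ i ∈ s, (E i)ᶜ).indicator 1 ω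
      = ∑ U ∈ s.powerset, (-1 : ℝ) ^ #U * (⋂ i ∈ U, E i).indicator 1 ω := by
    calc (⋂ i ∈ s, (E i)ᶜ).indicator (1 : Ω → ℝ) ω
        = ∏ i ∈ s, (1 + -(E i).indicator 1 ω) := by
          rw [← prod_const_one (s := s), ← prod_indicator_apply]
          simp [Set.indicator_compl']
      _ = _ := by
          simp_rw [prod_one_add, prod_neg, prod_indicator_apply, prod_const_one]
  have hmeas (U : Finset ι) : MeasurableSet (⋂ i ∈ U, E i) :=
    Finset.measurableSet_biInter U fun i _ => hE i
  simp_rw [← integral_indicator_one (hmeas _), ← integral_const_mul]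
  rw [← integral_indicator_one (Finset.measurableSet_biInter s fun i _ => (hE i).compl),
    ← integral_finsetSum _ fun U _ => ((integrable_const 1).indicator (hmeas U)).const_mul _]
  exact integral_congr_ae (.of_forall hind)

theorem inclusion_exclusion_measureReal_biUnion (hE : ∀ i, MeasurableSet (E i))
    (s : Finset ι) :
    μ.real (⋃ i ∈ s, E i)
      = ∑ U ∈ s.powerset with U.Nonempty,
          (-1 : ℝ) ^ (#U + 1) * μ.real (⋂ i ∈ U, E i) := by
  have h := inclusion_exclusion_measureReal_biInter_compl (μ := μ) hE s
  rw [sum_powerset_eq_add_sum_filter_nonempty, ← Set.compl_iUnion₂,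
    measureReal_compl (Finset.measurableSet_biUnion s fun i _ => hE i)] at h
  simp only [card_empty, pow_zero, one_mul, Finset.notMem_empty, Set.iInter_of_empty,
    Set.iInter_univ] at h
  simp_rw [pow_succ, mul_neg_one, neg_mul, sum_neg_distrib]
  linarith

theorem inclusion_exclusion_measureReal_biInter (hE : ∀ i, MeasurableSet (E i))
    {s : Finset ι} (hs : s.Nonempty) :
    μ.real (⋂ i ∈ s, E i)
      = ∑ U ∈ s.powerset with U.Nonempty,
          (-1 : ℝ) ^ (#U + 1) * μ.real (⋃ i ∈ U, E i) := by
  have h := inclusion_exclusion_measureReal_biInter_compl (μ := μ) (fun i => (hE i).compl) s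
  have hsign : ∑ U ∈ s.powerset, (-1 : ℝ) ^ #U = 0 := by
    exact_mod_cast sum_powerset_neg_one_pow_card_of_nonempty hs
  simp_rw [compl_compl, ← Set.compl_iUnion₂,
    measureReal_compl (Finset.measurableSet_biUnion _ fun i _ => hE i), mul_sub,
    sum_sub_distrib, ← sum_mul, hsign, zero_mul, zero_sub] at h
  rw [h, sum_powerset_eq_add_sum_filter_nonempty, neg_add, ← sum_neg_distrib]
  simp [pow_succ]

end InclusionExclusion

section TailSum

variable {Ω : Type*} [MeasurableSpace Ω] (μ : Measure Ω) {f : Ω → ℕ}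

theorem lintegral_natCast_eq_tsum_measure_lt (hf : Measurable f) :
    ∫⁻ ω, (f ω : ℝ≥0∞) ∂μ = ∑' t : ℕ, μ {ω | t < f ω} := by
  have hset (t : ℕ) : MeasurableSet {ω | t < f ω} := hf (measurableSet_Ioi (a := t))
  have hpt (ω : Ω) : (f ω : ℝ≥0∞) = ∑' t : ℕ, {ω | t < f ω}.indicator 1 ω := by
    rw [tsum_eq_sum (s := range (f ω)) fun t ht => Set.indicator_of_notMem (by simpa using ht) _,
      sum_congr rfl fun t ht => Set.indicator_of_mem (by simpa using ht) _]
    simp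
  simp_rw [hpt]
  rw [lintegral_tsum fun t => (measurable_one.indicator (hset t)).aemeasurable]
  simp_rw [lintegral_indicator_one (hset _)]

theorem integral_natCast_eq_tsum_measureReal_lt [IsFiniteMeasure μ] (hf : Measurable f) :
    ∫ ω, (f ω : ℝ) ∂μ = ∑' t : ℕ, μ.real {ω | t < f ω} := by
  have hmeas : Measurable fun ω => (f ω : ℝ) := measurable_from_nat.comp hf
  rw [integral_eq_lintegral_of_nonneg_ae (.of_forall fun ω => by positivity)
    hmeas.aestronglyMeasurable]
  simp_rw [ENNReal.ofReal_natCast, lintegral_natCast_eq_tsum_measure_lt μ hf]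
  exact ENNReal.tsum_toReal_eq fun t => measure_ne_top μ _

end TailSum

section Collecting

variable {Ω H : Type*} (X : ℕ → Ω → H)

def seen (t : ℕ) (ω : Ω) : Set H := (X · ω) '' Set.Icc 1 t

variable {X}

theorem seen_mono (ω : Ω) : Monotone (seen X · ω) :=
  fun _ _ h => Set.image_mono (Set.Icc_subset_Icc_right h)

theorem collectTime_eq_sInf (A : Set H) (ω : Ω) :
    collectTime X A ω = sInf {t | A ⊆ seen X t ω} := by
  simp [collectTime, seen, Set.subset_def, and_assoc]

theorem collectTime_le_iff {A : Set H} {ω : Ω} {t : ℕ} :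
    collectTime X A ω ≤ t ↔ A ⊆ seen X t ω ∨ ∀ t', ¬ A ⊆ seen X t' ω := by
  rw [collectTime_eq_sInf]
  by_cases h : ∃ t', A ⊆ seen X t' ω
  · rw [or_iff_left (not_forall_not.mpr h)]
    exact ⟨fun hle => Set.Subset.trans (Nat.sInf_mem h) (seen_mono ω hle),
      fun ht => Nat.sInf_le ht⟩
  · push Not at h
    simp [h]

variable [MeasurableSpace Ω] [MeasurableSpace H] [MeasurableSingletonClass H]

theorem measurableSet_mem_seen (hX : ∀ t, Measurable (X t)) (a : H) (t : ℕ) :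
    MeasurableSet {ω | a ∈ seen X t ω} := by
  have h : {ω | a ∈ seen X t ω} = ⋃ s ∈ Set.Icc 1 t, X s ⁻¹' {a} := by
    ext ω
    simp [seen]
  rw [h]
  exact .biUnion (Set.to_countable _) fun s _ => hX s (measurableSet_singleton a)

variable [Countable H]

theorem measurableSet_subset_seen (hX : ∀ t, Measurable (X t)) (A : Set H) (t : ℕ) :
    MeasurableSet {ω | A ⊆ seen X t ω} := by
  simp_rw [Set.subset_def, Set.ofPred_forall]
  exact .biInter A.to_countable fun a _ => measurableSet_mem_seen hX a t

theorem measurable_collectTime (hX : ∀ t, Measurable (X t)) (A : Set H) :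
    Measurable (collectTime X A) := by
  refine measurable_of_Iic fun t => ?_
  have h : collectTime X A ⁻¹' Set.Iic t
      = {ω | A ⊆ seen X t ω} ∪ ⋂ t', {ω | A ⊆ seen X t' ω}ᶜ := by
    ext ω
    simp [collectTime_le_iff]
  rw [h]
  exact (measurableSet_subset_seen hX A t).union
    (.iInter fun t' => (measurableSet_subset_seen hX A t').compl)

end Collecting

section Uniform

variable {Ω H : Type*} [MeasurableSpace Ω] [MeasurableSpace H] [MeasurableSingletonClass H]
  [Fintype H]

structure IsUniformIID (X : ℕ → Ω → H) (μ : Measure Ω) : Prop where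
  measurable : ∀ t, Measurable (X t)
  iIndepFun : iIndepFun X μ
  measure_eq : ∀ t c, μ (X t ⁻¹' {c}) = (Fintype.card H : ℝ≥0∞)⁻¹

variable {X : ℕ → Ω → H} {μ : Measure Ω} [IsProbabilityMeasure μ]

theorem IsUniformIID.measureReal_preimage (hX : IsUniformIID X μ) (t : ℕ) (S : Finset H) :
    μ.real (X t ⁻¹' S) = #S / Fintype.card H := by
  have h : X t ⁻¹' S = ⋃ c ∈ S, X t ⁻¹' {c} := by ext; simp
  rw [h, measureReal_biUnion_finset
    (fun c _ d _ hcd => (Set.disjoint_singleton.2 hcd).preimage (X t))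
    fun c _ => hX.measurable t (measurableSet_singleton c)]
  simp [measureReal_def, hX.measure_eq, div_eq_mul_inv]

theorem IsUniformIID.measureReal_disjoint_seen (hX : IsUniformIID X μ) (S : Finset H) (t : ℕ) :
    μ.real {ω | Disjoint (S : Set H) (seen X t ω)} = (1 - #S / Fintype.card H) ^ t := by
  have h : {ω | Disjoint (S : Set H) (seen X t ω)}
      = ⋂ s ∈ Finset.Icc 1 t, X s ⁻¹' (↑S)ᶜ := by
    ext ω
    simp only [seen, Set.disjoint_left, Set.mem_image, Set.mem_Icc, Set.mem_ofPred_eq,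
      Set.mem_iInter, Finset.mem_Icc, Set.mem_preimage, Set.mem_compl_iff, Finset.mem_coe]
    exact ⟨fun h i hi hS => h hS ⟨i, hi, rfl⟩,
      fun h a ha ⟨i, hi, hia⟩ => h i hi (hia ▸ ha)⟩
  have hS : MeasurableSet (S : Set H) := S.finite_toSet.measurableSet
  rw [h, measureReal_def, hX.iIndepFun.meas_biInter fun s _ => ⟨_, hS.compl, rfl⟩,
    ENNReal.toReal_prod]
  simp_rw [← measureReal_def, Set.preimage_compl,
    probReal_compl_eq_one_sub (hX.measurable _ hS), hX.measureReal_preimage]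
  simp

theorem IsUniformIID.measureReal_compl_subset_seen (hX : IsUniformIID X μ) (B : Finset H)
    (t : ℕ) :
    μ.real {ω | ↑B ⊆ seen X t ω}ᶜ
      = ∑ S ∈ B.powerset with S.Nonempty,
          (-1 : ℝ) ^ (#S + 1) * (1 - #S / Fintype.card H) ^ t := by
  have hunion : {ω | ↑B ⊆ seen X t ω}ᶜ = ⋃ b ∈ B, {ω | b ∈ seen X t ω}ᶜ := by
    ext
    simp [Set.subset_def]
  have hinter (S : Finset H) :
      ⋂ b ∈ S, {ω | b ∈ seen X t ω}ᶜ = {ω | Disjoint (S : Set H) (seen X t ω)} := by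
    ext
    simp [Set.disjoint_left]
  rw [hunion, inclusion_exclusion_measureReal_biUnion
    fun b => (measurableSet_mem_seen hX.measurable b t).compl]
  simp_rw [hinter, hX.measureReal_disjoint_seen]

theorem IsUniformIID.hasSum_measureReal_compl_subset_seen (hX : IsUniformIID X μ) (B : Finset H) :
    HasSum (fun t => μ.real {ω | ↑B ⊆ seen X t ω}ᶜ) (Fintype.card H * harm #B) := by
  simp_rw [hX.measureReal_compl_subset_seen, ← sum_powerset_filter_nonempty_neg_one_pow_div_card,
    mul_sum]
  refine hasSum_sum fun S hS => ?_
  have hpos : (0 : ℝ) < #S := by exact_mod_cast (mem_filter.1 hS).2.card_pos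
  have hle : (#S : ℝ) ≤ Fintype.card H := by exact_mod_cast card_le_univ S
  have hN : (0 : ℝ) < Fintype.card H := hpos.trans_le hle
  have hq : 0 ≤ 1 - #S / (Fintype.card H : ℝ) := by rw [sub_nonneg, div_le_one hN]; exact hle
  rw [show (Fintype.card H : ℝ) * ((-1) ^ (#S + 1) / #S)
      = (-1) ^ (#S + 1) * (1 - (1 - #S / Fintype.card H : ℝ))⁻¹ by
    rw [sub_sub_cancel, inv_div]; ring]
  exact (hasSum_geometric_of_lt_one hq (by linarith [div_pos hpos hN])).mul_left _

theorem IsUniformIID.ae_exists_subset_seen (hX : IsUniformIID X μ) (B : Finset H) :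
    ∀ᵐ ω ∂μ, ∃ t, ↑B ⊆ seen X t ω := by
  have hle (t : ℕ) :
      μ.real {ω | ¬ ∃ t, ↑B ⊆ seen X t ω} ≤ μ.real {ω | ↑B ⊆ seen X t ω}ᶜ :=
    measureReal_mono fun ω h => not_exists.1 h t
  have h0 := ge_of_tendsto'
    (hX.hasSum_measureReal_compl_subset_seen B).summable.tendsto_atTop_zero hle
  exact ae_iff.2 ((measureReal_eq_zero_iff).1 (le_antisymm h0 measureReal_nonneg))

theorem IsUniformIID.measureReal_lt_iInf_collectTime {ι : Type*} [Countable ι] [Nonempty ι]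
    (hX : IsUniformIID X μ) (A : ι → Finset H) (t : ℕ) :
    μ.real {ω | t < ⨅ i, collectTime X (A i) ω}
      = μ.real (⋂ i, {ω | ↑(A i) ⊆ seen X t ω}ᶜ) := by
  -- On the null event where some `A i` is never completed, `collectTime` is `sInf ∅ = 0`.
  refine measureReal_congr (Filter.eventuallyEq_set.2 ?_)
  filter_upwards [ae_all_iff.2 fun i => hX.ae_exists_subset_seen (A i)] with ω hω
  have hlt (i : ι) : t < collectTime X (A i) ω ↔ ¬ ↑(A i) ⊆ seen X t ω := by
    rw [← not_le, collectTime_le_iff, or_iff_left (not_forall_not.mpr (hω i))]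
  simp only [Set.mem_iInter, Set.mem_compl_iff, Set.mem_ofPred_eq, ← hlt, Nat.lt_iff_add_one_le,
    le_ciInf_iff (OrderBot.bddBelow _)]

theorem IsUniformIID.measureReal_lt_iInf_collectTime_eq_sum [DecidableEq H] {ι : Type*}
    [Fintype ι] [Nonempty ι] (hX : IsUniformIID X μ) (A : ι → Finset H) (t : ℕ) :
    μ.real {ω | t < ⨅ i, collectTime X (A i) ω}
      = ∑ U ∈ univ.powerset with U.Nonempty,
          (-1 : ℝ) ^ (#U + 1) * μ.real {ω | ↑(U.biUnion A) ⊆ seen X t ω}ᶜ := by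
  have hinter : ⋂ i, {ω | ↑(A i) ⊆ seen X t ω}ᶜ
      = ⋂ i ∈ (univ : Finset ι), {ω | ↑(A i) ⊆ seen X t ω}ᶜ := by
    simp
  have hunion (U : Finset ι) :
      ⋃ i ∈ U, {ω | ↑(A i) ⊆ seen X t ω}ᶜ
        = {ω | ↑(U.biUnion A) ⊆ seen X t ω}ᶜ := by
    ext
    simp
  rw [hX.measureReal_lt_iInf_collectTime, hinter, inclusion_exclusion_measureReal_biInter
    (fun i => (measurableSet_subset_seen hX.measurable (A i) t).compl) univ_nonempty]
  simp_rw [hunion]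

end Uniform

theorem expected_delay_first_to_complete_harmonic_general
    {Ω : Type*} [MeasurableSpace Ω] (μ : Measure Ω) [IsProbabilityMeasure μ]
    {H : Type*} [Fintype H] [MeasurableSpace H] [MeasurableSingletonClass H]
    (N : ℕ) (hcard : Fintype.card H = N)
    (X : ℕ → Ω → H) (hmeas : ∀ t, Measurable (X t))
    (hindep : iIndepFun X μ)
    (hunif : ∀ t, ∀ c : H, μ {ω | X t ω = c} = (N : ENNReal)⁻¹)
    (r : ℕ) (hr : 0 < r) (A : Fin r → Finset H)
    (hdisj : Pairwise fun i j => Disjoint (A i) (A j)) :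
    ∫ ω, ((⨅ i, collectTime X (A i : Set H) ω : ℕ) : ℝ) ∂μ =
      N * ∑ U ∈ (Finset.univ : Finset (Fin r)).powerset.filter (fun U => U.Nonempty),
        (-1 : ℝ) ^ (U.card + 1) * harm (∑ i ∈ U, (A i).card) := by
  classical
  subst hcard
  have hX : IsUniformIID X μ := ⟨hmeas, hindep, hunif⟩
  have : Nonempty (Fin r) := ⟨⟨0, hr⟩⟩
  rw [integral_natCast_eq_tsum_measureReal_lt μ (.iInf fun i => measurable_collectTime hmeas _)]
  refine HasSum.tsum_eq ?_
  simp_rw [hX.measureReal_lt_iInf_collectTime_eq_sum, mul_sum]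
  refine hasSum_sum fun U _ => ?_
  rw [← card_biUnion fun i _ j _ hij => hdisj hij, mul_left_comm]
  exact (hX.hasSum_measureReal_compl_subset_seen _).mul_left _

/-- Average delay of first-to-complete alignment as an inclusion–exclusion sum of
harmonic numbers: for i.i.d. uniform draws from a finite set `H` of size `N ≥ 1` and
pairwise disjoint nonempty subsets `A₁, …, A_r` with `|A_i| = a_i`, the first time
`T = min_i σ_{A_i}` satisfies
`E[T] = N · ∑_{∅ ≠ U ⊆ {1,…,r}} (−1)^{1−|U|} · H_{∑_{i∈U} a_i}`. -/
theorem expected_delay_first_to_complete_harmonic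
    {Ω : Type*} [MeasurableSpace Ω] (μ : Measure Ω) [IsProbabilityMeasure μ]
    {H : Type*} [Fintype H] [MeasurableSpace H] [MeasurableSingletonClass H]
    (N : ℕ) (hN : 1 ≤ N) (hcard : Fintype.card H = N)
    (X : ℕ → Ω → H) (hmeas : ∀ t, Measurable (X t))
    (hindep : iIndepFun X μ)
    (hunif : ∀ t, ∀ c : H, μ {ω | X t ω = c} = (N : ENNReal)⁻¹)
    (r : ℕ) (hr : 0 < r) (A : Fin r → Finset H)
    (hA : ∀ i, (A i).Nonempty)
    (hdisj : Pairwise fun i j => Disjoint (A i) (A j)) :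
    ∫ ω, ((⨅ i, collectTime X (A i : Set H) ω : ℕ) : ℝ) ∂μ =
      N * ∑ U ∈ (Finset.univ : Finset (Fin r)).powerset.filter (fun U => U.Nonempty),
        (-1 : ℝ) ^ (U.card + 1) * harm (∑ i ∈ U, (A i).card) :=
  expected_delay_first_to_complete_harmonic_general μ N hcard X hmeas hindep hunif r hr A hdisj
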